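/- arXiv:1004.3791 — 4 statements merged into one kernel-verified Lean document; each statement's English description precedes it below -/
import Mathlib

section
/- Let C ⊆ F_2^{2n} be weakly self-dual with all codewords of even weight, and suppose dim(C^⊥/C) = 2k with k ≥ 1 and C^⊥ \ C contains an odd-weight vector. Then there is a symplectic basis X̄_1, Z̄_1, ..., X̄_k, Z̄_k of C^⊥/C (with ⟨X̄_i, Z̄_j⟩ = δ_{ij} and ⟨X̄_i, X̄_j⟩ = ⟨Z̄_i, Z̄_j⟩ = 0 mod C) such that at most one of the 2k basis vectors has odd Hamming weight. -/
/-- Hamming weight of a binary vector. -/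
def wt {ι : Type*} [Fintype ι] (x : ι → ZMod 2) : ℕ :=
  (Finset.univ.filter fun i => x i ≠ 0).card

/-- Support of a binary vector. -/
def supp {ι : Type*} [Fintype ι] (x : ι → ZMod 2) : Finset ι :=
  Finset.univ.filter fun i => x i ≠ 0

/-- The `F₂` inner product. -/
def dot {ι : Type*} [Fintype ι] (x y : ι → ZMod 2) : ZMod 2 := ∑ i, x i * y i

/-- The dual code `C^⊥` of a linear code `C ⊆ F₂^ι`. -/
def dualCode {ι : Type*} [Fintype ι] (C : Submodule (ZMod 2) (ι → ZMod 2)) :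
    Submodule (ZMod 2) (ι → ZMod 2) where
  carrier := {y | ∀ x ∈ C, dot x y = 0}
  add_mem' := by
    intro a b ha hb x hx
    have h : dot x (a + b) = dot x a + dot x b := by
      simp [dot, mul_add, Finset.sum_add_distrib]
    simp only [Set.mem_setOf_eq] at *
    rw [h, ha x hx, hb x hx, add_zero]
  zero_mem' := by intro x _; simp [dot]
  smul_mem' := by
    intro c a ha x hx
    have h : dot x (c • a) = c * dot x a := by
      simp only [dot, Pi.smul_apply, smul_eq_mul, Finset.mul_sum]
      exact Finset.sum_congr rfl fun i _ => by ring
    simp only [Set.mem_setOf_eq] at *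
    rw [h, ha x hx, mul_zero]

/-! Pick an odd `v ∈ C^⊥` and the all-ones vector `1`, which lies in `C^⊥` because codewords
have even weight. Over `F₂` we have `⟨u, 1⟩ = ⟨u, u⟩ = wt u`, so `⟨v, 1⟩ = 1` and `⟨1, 1⟩ = 0`:
take `X₁ = v`, `Z₁ = 1`. On the part of `C^⊥` orthogonal to both, the form is alternating (every
vector has even weight) with radical still `C`, and repeatedly splitting off hyperbolic pairs
`x, y` (`⟨x, y⟩ = 1`, `⟨y, y⟩ = 0`) yields the remaining `k - 1` pairs, all of even weight. -/

open Module Submodule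
open LinearMap (BilinForm)

namespace LinearMap.BilinForm

variable {K V : Type*} [Field K] [AddCommGroup V] [Module K V] {B : BilinForm K V}

lemma orthogonal_sup (N L : Submodule K V) :
    B.orthogonal (N ⊔ L) = B.orthogonal N ⊓ B.orthogonal L := by
  refine le_antisymm (le_inf (orthogonal_le le_sup_left) (orthogonal_le le_sup_right)) ?_
  rintro m ⟨hN, hL⟩ _ hn
  obtain ⟨a, ha, b, hb, rfl⟩ := mem_sup.1 hn
  rw [map_add, LinearMap.add_apply, hN a ha, hL b hb, add_zero]

lemma inf_orthogonal_inf_orthogonal {P U : Submodule K V}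
    (hU : P ⊔ (U ⊓ B.orthogonal P) = U) :
    U ⊓ B.orthogonal P ⊓ B.orthogonal (U ⊓ B.orthogonal P) = U ⊓ B.orthogonal U := by
  ext u
  constructor
  · rintro ⟨⟨hu, huP⟩, huU'⟩
    refine ⟨hu, ?_⟩
    rw [← hU, orthogonal_sup]
    exact ⟨huP, huU'⟩
  · rintro ⟨hu, huU⟩
    exact ⟨⟨hu, orthogonal_le (hU ▸ le_sup_left) huU⟩, orthogonal_le inf_le_left huU⟩

lemma mem_orthogonal_span_pair {x y w : V} :
    w ∈ B.orthogonal (span K {x, y}) ↔ B x w = 0 ∧ B y w = 0 := by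
  refine ⟨fun h => ⟨h x (subset_span (by simp)), h y (subset_span (by simp))⟩, ?_⟩
  rintro ⟨hx, hy⟩ n hn
  obtain ⟨a, b, rfl⟩ := mem_span_pair.1 hn
  simp [hx, hy]

section HyperbolicPair

variable {x y : V}

lemma eq_zero_of_smul_add_smul_mem_orthogonal (hB : B.IsSymm) (hxy : B x y = 1)
    (hyy : B y y = 0) {a b : K} (h : a • x + b • y ∈ B.orthogonal (span K {x, y})) :
    a = 0 ∧ b = 0 := by
  obtain ⟨hx, hy⟩ := mem_orthogonal_span_pair.1 h
  have hyx : B y x = 1 := hB.eq y x ▸ hxy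
  simp only [map_add, map_smul, smul_eq_mul, hxy, hyx, hyy, mul_one, mul_zero,
    add_zero] at hx hy
  exact ⟨hy, by simpa [hy] using hx⟩

lemma linearIndependent_pair_of_apply_eq_one (hB : B.IsSymm) (hxy : B x y = 1)
    (hyy : B y y = 0) : LinearIndependent K ![x, y] :=
  LinearIndependent.pair_iff.2 fun _ _ hab =>
    eq_zero_of_smul_add_smul_mem_orthogonal hB hxy hyy (hab ▸ zero_mem _)

lemma finrank_span_pair_of_apply_eq_one (hB : B.IsSymm) (hxy : B x y = 1) (hyy : B y y = 0) :
    finrank K (span K {x, y}) = 2 := by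
  rw [← Matrix.range_cons_cons_empty x y ![],
    finrank_span_eq_card (linearIndependent_pair_of_apply_eq_one hB hxy hyy), Fintype.card_fin]

lemma disjoint_span_pair_orthogonal (hB : B.IsSymm) (hxy : B x y = 1) (hyy : B y y = 0) :
    Disjoint (span K {x, y}) (B.orthogonal (span K {x, y})) := by
  refine disjoint_def.2 fun w hw hw' => ?_
  obtain ⟨a, b, rfl⟩ := mem_span_pair.1 hw
  obtain ⟨rfl, rfl⟩ := eq_zero_of_smul_add_smul_mem_orthogonal hB hxy hyy hw'
  simp

variable [FiniteDimensional K V] {U : Submodule K V}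

lemma span_pair_sup_inf_orthogonal (hB : B.IsSymm) (hxy : B x y = 1) (hyy : B y y = 0)
    (hx : x ∈ U) (hy : y ∈ U) :
    span K {x, y} ⊔ (U ⊓ B.orthogonal (span K {x, y})) = U := by
  have hP : span K {x, y} ≤ U :=
    span_le.2 (Set.insert_subset hx (Set.singleton_subset_iff.2 hy))
  have hcompl := (isCompl_orthogonal_iff_disjoint hB.isRefl).2
    (disjoint_span_pair_orthogonal hB hxy hyy)
  rw [inf_comm, ← sup_inf_assoc_of_le _ hP, hcompl.sup_eq_top, top_inf_eq]

lemma finrank_eq_finrank_inf_orthogonal_span_pair_add_two (hB : B.IsSymm) (hxy : B x y = 1)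
    (hyy : B y y = 0) (hx : x ∈ U) (hy : y ∈ U) :
    finrank K U = finrank K ↥(U ⊓ B.orthogonal (span K {x, y})) + 2 := by
  have h := finrank_sup_add_finrank_inf_eq (span K {x, y}) (U ⊓ B.orthogonal (span K {x, y}))
  rw [span_pair_sup_inf_orthogonal hB hxy hyy hx hy,
    ((disjoint_span_pair_orthogonal hB hxy hyy).mono_right inf_le_right).eq_bot, finrank_bot,
    finrank_span_pair_of_apply_eq_one hB hxy hyy] at h
  omega

end HyperbolicPair

structure IsSymplecticBasisModulo (B : BilinForm K V) (C U : Submodule K V) {k : ℕ}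
    (X Z : Fin k → V) : Prop where
  X_mem : ∀ i, X i ∈ U
  Z_mem : ∀ i, Z i ∈ U
  apply_X_Z : ∀ i j, B (X i) (Z j) = if i = j then 1 else 0
  apply_X_X : ∀ i j, i ≠ j → B (X i) (X j) = 0
  apply_Z_Z : ∀ i j, i ≠ j → B (Z i) (Z j) = 0
  sup_span : C ⊔ span K (Set.range X ∪ Set.range Z) = U

lemma cons_apply_cons_eq_zero (hB : B.IsSymm) {k : ℕ} {x : V} {X : Fin k → V}
    (hxX : ∀ j, B x (X j) = 0) (hX : ∀ i j, i ≠ j → B (X i) (X j) = 0) :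
    ∀ i j, i ≠ j →
      B ((Fin.cons x X : Fin (k + 1) → V) i) ((Fin.cons x X : Fin (k + 1) → V) j) = 0 := by
  intro i j hij
  cases i using Fin.cases <;> cases j using Fin.cases
  · exact absurd rfl hij
  · exact hxX _
  · simpa [hB.eq _ x] using hxX _
  · exact hX _ _ (by simpa using hij)

namespace IsSymplecticBasisModulo

variable {C U : Submodule K V} {k : ℕ} {X Z : Fin k → V}

lemma X_notMem (h : IsSymplecticBasisModulo B C U X Z) (hB : B.IsSymm)
    (hC : C ≤ B.orthogonal U) (i : Fin k) : X i ∉ C := fun hX => by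
  simpa [hB.eq (Z i), h.apply_X_Z] using hC hX (Z i) (h.Z_mem i)

lemma Z_notMem (h : IsSymplecticBasisModulo B C U X Z) (hC : C ≤ B.orthogonal U) (i : Fin k) :
    Z i ∉ C := fun hZ => by
  simpa [h.apply_X_Z] using hC hZ (X i) (h.X_mem i)

lemma cons [FiniteDimensional K V] (hB : B.IsSymm) {x y : V} (hxy : B x y = 1)
    (hyy : B y y = 0) (hx : x ∈ U) (hy : y ∈ U)
    (h : IsSymplecticBasisModulo B C (U ⊓ B.orthogonal (span K {x, y})) X Z) :
    IsSymplecticBasisModulo B C U (Fin.cons x X) (Fin.cons y Z) where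
  X_mem i := Fin.cases hx (fun j => (h.X_mem j).1) i
  Z_mem i := Fin.cases hy (fun j => (h.Z_mem j).1) i
  apply_X_Z i j := by
    have hxZ j := (mem_orthogonal_span_pair.1 (h.Z_mem j).2).1
    have hyX j := (mem_orthogonal_span_pair.1 (h.X_mem j).2).2
    cases i using Fin.cases <;> cases j using Fin.cases
    · simpa using hxy
    · simpa [eq_comm] using hxZ _
    · simpa [hB.eq _ y] using hyX _
    · simpa using h.apply_X_Z _ _
  apply_X_X := cons_apply_cons_eq_zero hB
    (fun j => (mem_orthogonal_span_pair.1 (h.X_mem j).2).1) h.apply_X_X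
  apply_Z_Z := cons_apply_cons_eq_zero hB
    (fun j => (mem_orthogonal_span_pair.1 (h.Z_mem j).2).2) h.apply_Z_Z
  sup_span := by
    have hxy_set : insert x (Set.range X) ∪ insert y (Set.range Z) =
        {x, y} ∪ (Set.range X ∪ Set.range Z) := by
      ext; simp only [Set.mem_union, Set.mem_insert_iff, Set.mem_singleton_iff]; tauto
    rw [Fin.range_cons, Fin.range_cons, hxy_set, span_union, sup_left_comm, h.sup_span,
      span_pair_sup_inf_orthogonal hB hxy hyy hx hy]

end IsSymplecticBasisModulo

theorem exists_isSymplecticBasisModulo [FiniteDimensional K V] (hB : B.IsSymm) {k : ℕ}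
    {C U : Submodule K V} (halt : ∀ u ∈ U, B u u = 0) (hrad : U ⊓ B.orthogonal U = C)
    (hdim : finrank K U = finrank K C + 2 * k) :
    ∃ X Z : Fin k → V, IsSymplecticBasisModulo B C U X Z := by
  induction k generalizing U with
  | zero =>
    have hCU : C = U := eq_of_le_of_finrank_le (hrad ▸ inf_le_left) (by omega)
    exact ⟨Fin.elim0, Fin.elim0,
      ⟨finZeroElim, finZeroElim, finZeroElim, finZeroElim, finZeroElim, by simp [hCU]⟩⟩
  | succ k ih =>
    obtain ⟨x, hxU, hxC⟩ : ∃ x ∈ U, x ∉ C := SetLike.not_le_iff_exists.1 fun hUC =>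
      by have := finrank_mono hUC; omega
    obtain ⟨w, hwU, hxw⟩ : ∃ w ∈ U, B x w ≠ 0 := by
      by_contra! h
      exact hxC (hrad ▸ ⟨hxU, fun w hw => by rw [hB.eq, h w hw]⟩)
    set y := (B x w)⁻¹ • w
    have hyU : y ∈ U := smul_mem _ _ hwU
    have hxy : B x y = 1 := by simp [y, hxw]
    have hyy : B y y = 0 := halt y hyU
    obtain ⟨X, Z, h⟩ := ih (U := U ⊓ B.orthogonal (span K {x, y})) (fun u hu => halt u hu.1)
      (by rw [inf_orthogonal_inf_orthogonal (span_pair_sup_inf_orthogonal hB hxy hyy hxU hyU),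
        hrad])
      (by have := finrank_eq_finrank_inf_orthogonal_span_pair_add_two hB hxy hyy hxU hyU; omega)
    exact ⟨_, _, h.cons hB hxy hyy hxU hyU⟩

end LinearMap.BilinForm

open LinearMap.BilinForm

section Binary

variable {ι : Type*} [Fintype ι]

def dotForm : BilinForm (ZMod 2) (ι → ZMod 2) := dotProductBilin (ZMod 2) (ZMod 2)

lemma dotForm_apply (x y : ι → ZMod 2) : dotForm x y = dot x y := rfl

lemma dotForm_isSymm : (dotForm : BilinForm (ZMod 2) (ι → ZMod 2)).IsSymm :=
  ⟨dotProduct_comm⟩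

lemma dotForm_nondegenerate : (dotForm : BilinForm (ZMod 2) (ι → ZMod 2)).Nondegenerate :=
  dotForm_isSymm.isRefl.nondegenerate_iff_separatingLeft.2 fun x hx => dotProduct_eq_zero x hx

lemma dualCode_eq_orthogonal (C : Submodule (ZMod 2) (ι → ZMod 2)) :
    dualCode C = dotForm.orthogonal C :=
  SetLike.ext fun _ => Iff.rfl

lemma dot_self_eq_wt (x : ι → ZMod 2) : dot x x = wt x := by
  rw [wt, Finset.card_filter, Nat.cast_sum]
  refine Finset.sum_congr rfl fun i _ => ?_
  generalize x i = a
  revert a; decide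

lemma even_wt_iff (x : ι → ZMod 2) : Even (wt x) ↔ dot x x = 0 := by
  rw [dot_self_eq_wt, ZMod.natCast_eq_zero_iff_even]

lemma odd_wt_iff (x : ι → ZMod 2) : Odd (wt x) ↔ dot x x = 1 := by
  rw [dot_self_eq_wt, ZMod.natCast_eq_one_iff_odd]

lemma dot_one_right (x : ι → ZMod 2) : dot x 1 = dot x x :=
  Finset.sum_congr rfl fun i _ => by
    rw [Pi.one_apply]
    generalize x i = a
    revert a; decide

lemma dot_one_one : dot (1 : ι → ZMod 2) 1 = Fintype.card ι := by
  simp [dot]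

lemma one_mem_dualCode {C : Submodule (ZMod 2) (ι → ZMod 2)} (hC : ∀ x ∈ C, Even (wt x)) :
    1 ∈ dualCode C := fun x hx => by
  rw [dot_one_right, ← even_wt_iff]
  exact hC x hx

lemma card_filter_odd_wt_cons_le {k : ℕ} {v e : ι → ZMod 2}
    {X Z : Fin k → ι → ZMod 2} (he : Even (wt e)) (hX : ∀ i, Even (wt (X i)))
    (hZ : ∀ i, Even (wt (Z i))) :
    (Finset.univ.filter fun i => Odd (wt ((Fin.cons v X : Fin (k + 1) → ι → ZMod 2) i))).card +
      (Finset.univ.filter fun i => Odd (wt ((Fin.cons e Z : Fin (k + 1) → ι → ZMod 2) i))).card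
      ≤ 1 := by
  have hX0 : (Finset.univ.filter fun i =>
      Odd (wt ((Fin.cons v X : Fin (k + 1) → ι → ZMod 2) i))) ⊆ {0} := by
    intro i hi
    cases i using Fin.cases with
    | zero => simp
    | succ i => simp [Nat.not_odd_iff_even.2 (hX i)] at hi
  have hZ0 : (Finset.univ.filter fun i =>
      Odd (wt ((Fin.cons e Z : Fin (k + 1) → ι → ZMod 2) i))) = ∅ :=
    Finset.filter_eq_empty_iff.2 fun i _ => by
      cases i using Fin.cases <;> simp [Nat.not_odd_iff_even, he, hZ]
  rw [hZ0, Finset.card_empty, add_zero]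
  exact (Finset.card_le_card hX0).trans (Finset.card_singleton _).le

end Binary

/-- suppose `C ⊆ F₂^{2n}` is weakly self-dual with all codewords of even
weight, `dim(C^⊥/C) = 2k` with `k ≥ 1`, and `C^⊥ \ C` contains an odd-weight vector.
Then there is a symplectic basis `X̄_1, Z̄_1, …, X̄_k, Z̄_k` of `C^⊥/C`
(`⟨X̄_i, Z̄_j⟩ = δ_{ij}`, and distinct same-type basis vectors pair to `0`)
such that at most one of the `2k` basis vectors has odd Hamming weight. -/
theorem stmt_8 {n k : ℕ} (hk : 1 ≤ k)
    (C : Submodule (ZMod 2) (Fin (2 * n) → ZMod 2))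
    (hsd : C ≤ dualCode C)
    (hEven : ∀ x ∈ C, Even (wt x))
    (hdim : Module.finrank (ZMod 2) (dualCode C) = Module.finrank (ZMod 2) C + 2 * k)
    (hodd : ∃ v : Fin (2 * n) → ZMod 2, v ∈ dualCode C ∧ v ∉ C ∧ Odd (wt v)) :
    ∃ X Z : Fin k → (Fin (2 * n) → ZMod 2),
      (∀ i, X i ∈ dualCode C) ∧ (∀ i, Z i ∈ dualCode C) ∧
      (∀ i, X i ∉ C) ∧ (∀ i, Z i ∉ C) ∧
      (∀ i j, dot (X i) (Z j) = if i = j then 1 else 0) ∧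
      (∀ i j, i ≠ j → dot (X i) (X j) = 0) ∧
      (∀ i j, i ≠ j → dot (Z i) (Z j) = 0) ∧
      C ⊔ Submodule.span (ZMod 2) (Set.range X ∪ Set.range Z) = dualCode C ∧
      (Finset.univ.filter fun i => Odd (wt (X i))).card +
        (Finset.univ.filter fun i => Odd (wt (Z i))).card ≤ 1 := by
  obtain ⟨k, rfl⟩ : ∃ k', k = k' + 1 := ⟨k - 1, by omega⟩
  obtain ⟨v, hvD, -, hv⟩ := hodd
  let B : BilinForm (ZMod 2) (Fin (2 * n) → ZMod 2) := dotForm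
  have hB : B.IsSymm := dotForm_isSymm
  have hrad : dualCode C ⊓ B.orthogonal (dualCode C) = C := by
    rw [dualCode_eq_orthogonal,
      LinearMap.BilinForm.orthogonal_orthogonal dotForm_nondegenerate hB.isRefl, inf_eq_right]
    exact hsd
  have hv1 : B v 1 = 1 := by rw [dotForm_apply, dot_one_right, ← odd_wt_iff]; exact hv
  have h11 : B 1 1 = 0 := by
    rw [dotForm_apply, dot_one_one, Fintype.card_fin, ZMod.natCast_eq_zero_iff_even]
    exact even_two_mul n
  have h1D := one_mem_dualCode hEven
  have halt : ∀ u ∈ dualCode C ⊓ B.orthogonal (span (ZMod 2) {v, 1}), B u u = 0 :=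
    fun u hu => by
      rw [dotForm_apply, ← dot_one_right, ← dotForm_apply, hB.eq]
      exact (mem_orthogonal_span_pair.1 hu.2).2
  obtain ⟨X, Z, hU⟩ := exists_isSymplecticBasisModulo hB (k := k) halt
    (by rw [inf_orthogonal_inf_orthogonal (span_pair_sup_inf_orthogonal hB hv1 h11 hvD h1D),
      hrad])
    (by have := finrank_eq_finrank_inf_orthogonal_span_pair_add_two hB hv1 h11 hvD h1D; omega)
  have hC : C ≤ B.orthogonal (dualCode C) := le_orthogonal_orthogonal hB.isRefl
  have h := hU.cons hB hv1 h11 hvD h1D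
  refine ⟨_, _, h.X_mem, h.Z_mem, h.X_notMem hB hC, h.Z_notMem hC, h.apply_X_Z, h.apply_X_X,
    h.apply_Z_Z, h.sup_span, card_filter_odd_wt_cons_le ((even_wt_iff 1).2 h11)
      (fun i => (even_wt_iff _).2 (halt _ (hU.X_mem i)))
      (fun i => (even_wt_iff _).2 (halt _ (hU.Z_mem i)))⟩
end

section
/- Under the Kitaev mapping of an [[n,k,d]] stabilizer code to a Majorana code on 4n modes, a Majorana operator commuting with all generators D_j = b_j^x b_j^y b_j^z c_j must act on an even number of the four modes {b_j^x, b_j^y, b_j^z, c_j} for each j; consequently every logical operator of the Majorana code corresponds (modulo the D_j) to a Pauli operator on the n qubits, and since each nontrivial single-qubit Pauli maps to a weight-2 Majorana operator, the distance of the Majorana code is exactly 2d. -/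
/-- The symplectic form on `F₂^{2n}` encoding commutation of Pauli operators:
a Pauli operator is encoded as a pair `(x, z)` of its X- and Z-vectors. -/
def symp {n : ℕ} (p q : (Fin n → ZMod 2) × (Fin n → ZMod 2)) : ZMod 2 :=
  ∑ j, (p.1 j * q.2 j + p.2 j * q.1 j)

/-- The symplectic dual (the set of Pauli vectors commuting with every element of `S`). -/
def sympDual {n : ℕ}
    (S : Submodule (ZMod 2) ((Fin n → ZMod 2) × (Fin n → ZMod 2))) :
    Submodule (ZMod 2) ((Fin n → ZMod 2) × (Fin n → ZMod 2)) where
  carrier := {p | ∀ q ∈ S, symp q p = 0}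
  add_mem' := by
    intro a b ha hb q hq
    have h : symp q (a + b) = symp q a + symp q b := by
      simp only [symp, Prod.fst_add, Prod.snd_add, Pi.add_apply, mul_add,
        ← Finset.sum_add_distrib]
      exact Finset.sum_congr rfl fun i _ => by ring
    simp only [Set.mem_setOf_eq] at *
    rw [h, ha q hq, hb q hq, add_zero]
  zero_mem' := by intro q _; simp [symp]
  smul_mem' := by
    intro t a ha q hq
    have h : symp q (t • a) = t * symp q a := by
      simp only [symp, Prod.smul_fst, Prod.smul_snd, Pi.smul_apply, smul_eq_mul,
        Finset.mul_sum]
      exact Finset.sum_congr rfl fun i _ => by ring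
    simp only [Set.mem_setOf_eq] at *
    rw [h, ha q hq, mul_zero]

/-- Kitaev's mapping: each qubit `j` is replaced by four Majorana modes
`b_j^x, b_j^y, b_j^z, c_j` (coordinates `0,1,2,3` of the block `j`); modulo the block
parity operators `D_j`, the Pauli `X_j` maps to `b_j^x c_j`, `Z_j` to `b_j^z c_j`, and
`Y_j` to `b_j^y c_j`.  In the `F₂` picture this is the linear map below. -/
def kitaevMap {n : ℕ} (p : (Fin n → ZMod 2) × (Fin n → ZMod 2)) :
    Fin n × Fin 4 → ZMod 2 :=
  fun q =>
    if q.2 = 0 then p.1 q.1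
    else if q.2 = 2 then p.2 q.1
    else if q.2 = 3 then p.1 q.1 + p.2 q.1
    else 0

/-- The support vector of the block parity operator `D_j = b_j^x b_j^y b_j^z c_j`. -/
def Dvec {n : ℕ} (j : Fin n) : Fin n × Fin 4 → ZMod 2 :=
  fun q => if q.1 = j then 1 else 0

/-- The Majorana fermion code (in the `F₂` support picture) obtained from a qubit
stabilizer code `S` by Kitaev's mapping, with the extra generators `D_j`. -/
def kitaevCode {n : ℕ}
    (S : Submodule (ZMod 2) ((Fin n → ZMod 2) × (Fin n → ZMod 2))) :
    Submodule (ZMod 2) (Fin n × Fin 4 → ZMod 2) :=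
  Submodule.span (ZMod 2) (kitaevMap '' (S : Set _) ∪ Set.range Dvec)


/-! Commuting with `D_j` means that block `j` of `v` has even parity. An even block
`(v₀, v₁, v₂, v₃)` is the Kitaev image of the Pauli `(v₀ + v₁, v₂ + v₁)` plus `v₁` times the
all-ones block, so modulo the `D_j` every element of the centralizer is the image of a Pauli.
The image turns the symplectic form into the dot product and detects membership in the
stabilizer, and a block carrying a nontrivial single-qubit Pauli has weight at least `2`,
with equality for the image itself; hence the two distances differ exactly by a factor `2`. -/

open Finset

section Dot

variable {ι : Type*} [Fintype ι]

lemma dot_add_left (x y v : ι → ZMod 2) : dot (x + y) v = dot x v + dot y v := by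
  simp [dot, add_mul, sum_add_distrib]

lemma dot_add_right (x v w : ι → ZMod 2) : dot x (v + w) = dot x v + dot x w := by
  simp [dot, mul_add, sum_add_distrib]

lemma dot_smul_left (c : ZMod 2) (x v : ι → ZMod 2) : dot (c • x) v = c * dot x v := by
  simp [dot, mul_sum, mul_assoc]

lemma mem_dualCode_span_iff (T : Set (ι → ZMod 2)) (v : ι → ZMod 2) :
    v ∈ dualCode (Submodule.span (ZMod 2) T) ↔ ∀ x ∈ T, dot x v = 0 := by
  refine ⟨fun h x hx => h x (Submodule.subset_span hx), fun h x hx => ?_⟩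
  induction hx using Submodule.span_induction with
  | mem y hy => exact h y hy
  | zero => simp [dot]
  | add y z _ _ hy hz => rw [dot_add_left, hy, hz, add_zero]
  | smul c y _ hy => rw [dot_smul_left, hy, mul_zero]

lemma even_card_supp_of_sum_eq_zero (w : ι → ZMod 2) (h : ∑ i, w i = 0) :
    Even (supp w).card := by
  rw [← ZMod.natCast_eq_zero_iff_even, ← h, ← sum_filter_ne_zero, card_eq_sum_ones,
    Nat.cast_sum, Nat.cast_one]
  refine sum_congr rfl fun i hi => ?_
  have one_eq : ∀ x : ZMod 2, x ≠ 0 → 1 = x := by decide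
  exact one_eq _ (mem_filter.mp hi).2

end Dot

section Kitaev

variable {n : ℕ}

/-- Left inverse of `kitaevMap` killing every `Dvec j`: the block `(v₀, v₁, v₂, v₃)` is read
as the Pauli with X-part `v₀ + v₁` and Z-part `v₂ + v₁`. -/
def pauliPart : (Fin n × Fin 4 → ZMod 2) →ₗ[ZMod 2] (Fin n → ZMod 2) × (Fin n → ZMod 2) where
  toFun v := (fun j => v (j, 0) + v (j, 1), fun j => v (j, 2) + v (j, 1))
  map_add' v w := by ext j <;> simp only [Pi.add_apply, Prod.fst_add, Prod.snd_add] <;> ring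
  map_smul' c v := by ext j <;> simp only [Pi.smul_apply, smul_eq_mul, Prod.smul_fst,
    Prod.smul_snd, RingHom.id_apply] <;> ring

/-- `∑ j, v (j, 1) • Dvec j`, the component of `v` along the block parities. -/
def dPart (v : Fin n × Fin 4 → ZMod 2) : Fin n × Fin 4 → ZMod 2 := fun q => v (q.1, 1)

lemma pauliPart_kitaevMap (p : (Fin n → ZMod 2) × (Fin n → ZMod 2)) :
    pauliPart (kitaevMap p) = p := by
  ext j <;> simp [pauliPart, kitaevMap]

lemma pauliPart_Dvec (j : Fin n) : pauliPart (Dvec j) = 0 := by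
  ext i <;> simp [pauliPart, Dvec, CharTwo.add_self_eq_zero]

lemma kitaevCode_le_comap_pauliPart
    (S : Submodule (ZMod 2) ((Fin n → ZMod 2) × (Fin n → ZMod 2))) :
    kitaevCode S ≤ S.comap pauliPart := by
  refine Submodule.span_le.mpr ?_
  rintro _ (⟨p, hp, rfl⟩ | ⟨j, rfl⟩)
  · simpa [pauliPart_kitaevMap] using hp
  · simp [pauliPart_Dvec]

lemma kitaevMap_mem_kitaevCode_iff
    (S : Submodule (ZMod 2) ((Fin n → ZMod 2) × (Fin n → ZMod 2)))
    (p : (Fin n → ZMod 2) × (Fin n → ZMod 2)) :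
    kitaevMap p ∈ kitaevCode S ↔ p ∈ S := by
  refine ⟨fun h => ?_, fun h => Submodule.subset_span (Or.inl ⟨p, h, rfl⟩)⟩
  simpa [pauliPart_kitaevMap] using kitaevCode_le_comap_pauliPart S h

lemma dPart_mem_kitaevCode
    (S : Submodule (ZMod 2) ((Fin n → ZMod 2) × (Fin n → ZMod 2)))
    (v : Fin n × Fin 4 → ZMod 2) : dPart v ∈ kitaevCode S := by
  have h : dPart v = ∑ j, v (j, 1) • Dvec j := by
    funext q
    simp [dPart, Dvec, Finset.sum_apply, mul_ite, sum_ite_eq]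
  rw [h]
  exact Submodule.sum_mem _ fun j _ =>
    Submodule.smul_mem _ _ (Submodule.subset_span (Or.inr ⟨j, rfl⟩))

lemma kitaevMap_pauliPart_add_dPart {v : Fin n × Fin 4 → ZMod 2}
    (hv : ∀ j, ∑ a, v (j, a) = 0) : kitaevMap (pauliPart v) + dPart v = v := by
  have key : ∀ a b c d : ZMod 2, a + b + c + d = 0 →
      a + b + b = a ∧ c + b + b = c ∧ a + b + (c + b) + b = d := by decide
  funext ⟨j, i⟩
  have h := key _ _ _ _ (by simpa [Fin.sum_univ_four] using hv j)
  fin_cases i <;> simp [kitaevMap, pauliPart, dPart, h]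

lemma dot_Dvec (j : Fin n) (v : Fin n × Fin 4 → ZMod 2) :
    dot (Dvec j) v = ∑ a, v (j, a) := by
  rw [dot, Fintype.sum_prod_type, sum_eq_single j (fun i _ hi => by simp [Dvec, hi])
    (fun h => absurd (mem_univ j) h)]
  simp [Dvec]

lemma sum_kitaevMap_block (p : (Fin n → ZMod 2) × (Fin n → ZMod 2)) (j : Fin n) :
    ∑ a, kitaevMap p (j, a) = 0 := by
  have key : ∀ a b : ZMod 2, a + 0 + b + (a + b) = 0 := by decide
  simpa [Fin.sum_univ_four, kitaevMap] using key (p.1 j) (p.2 j)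

lemma dot_kitaevMap_kitaevMap (s p : (Fin n → ZMod 2) × (Fin n → ZMod 2)) :
    dot (kitaevMap s) (kitaevMap p) = symp s p := by
  have key : ∀ a₁ a₂ b₁ b₂ : ZMod 2,
      a₁ * b₁ + a₂ * b₂ + (a₁ + a₂) * (b₁ + b₂) = a₁ * b₂ + a₂ * b₁ := by decide
  rw [dot, Fintype.sum_prod_type, symp]
  refine sum_congr rfl fun j _ => ?_
  simpa [Fin.sum_univ_four, kitaevMap, add_assoc] using key (s.1 j) (s.2 j) (p.1 j) (p.2 j)

lemma dot_kitaevMap_dPart (s : (Fin n → ZMod 2) × (Fin n → ZMod 2))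
    (v : Fin n × Fin 4 → ZMod 2) : dot (kitaevMap s) (dPart v) = 0 := by
  rw [dot, Fintype.sum_prod_type]
  refine sum_eq_zero fun j _ => ?_
  simp only [dPart, ← sum_mul, sum_kitaevMap_block, zero_mul]

lemma mem_dualCode_kitaevCode_iff
    (S : Submodule (ZMod 2) ((Fin n → ZMod 2) × (Fin n → ZMod 2)))
    (v : Fin n × Fin 4 → ZMod 2) :
    v ∈ dualCode (kitaevCode S) ↔
      (∀ s ∈ S, dot (kitaevMap s) v = 0) ∧ ∀ j, ∑ a, v (j, a) = 0 := by
  simp only [kitaevCode, mem_dualCode_span_iff, Set.mem_union, or_imp, forall_and,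
    Set.forall_mem_image, Set.forall_mem_range, dot_Dvec, SetLike.mem_coe]

lemma kitaevMap_mem_dualCode_kitaevCode
    {S : Submodule (ZMod 2) ((Fin n → ZMod 2) × (Fin n → ZMod 2))}
    {p : (Fin n → ZMod 2) × (Fin n → ZMod 2)} (hp : p ∈ sympDual S) :
    kitaevMap p ∈ dualCode (kitaevCode S) :=
  (mem_dualCode_kitaevCode_iff S _).mpr
    ⟨fun s hs => by rw [dot_kitaevMap_kitaevMap]; exact hp s hs, sum_kitaevMap_block p⟩

lemma pauliPart_mem_sympDual {S : Submodule (ZMod 2) ((Fin n → ZMod 2) × (Fin n → ZMod 2))}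
    {v : Fin n × Fin 4 → ZMod 2} (hv : v ∈ dualCode (kitaevCode S)) :
    pauliPart v ∈ sympDual S := by
  obtain ⟨hS, hblock⟩ := (mem_dualCode_kitaevCode_iff S v).mp hv
  intro s hs
  have h := hS s hs
  rwa [← kitaevMap_pauliPart_add_dPart hblock, dot_add_right, dot_kitaevMap_dPart, add_zero,
    dot_kitaevMap_kitaevMap] at h

lemma pauliPart_notMem {S : Submodule (ZMod 2) ((Fin n → ZMod 2) × (Fin n → ZMod 2))}
    {v : Fin n × Fin 4 → ZMod 2} (hv : v ∈ dualCode (kitaevCode S)) (hvS : v ∉ kitaevCode S) :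
    pauliPart v ∉ S := by
  intro h
  refine hvS ?_
  rw [← kitaevMap_pauliPart_add_dPart ((mem_dualCode_kitaevCode_iff S v).mp hv).2]
  exact add_mem ((kitaevMap_mem_kitaevCode_iff S _).mpr h) (dPart_mem_kitaevCode S v)

lemma wt_eq_sum_card_supp_block (v : Fin n × Fin 4 → ZMod 2) :
    wt v = ∑ j, (supp fun a => v (j, a)).card := by
  rw [wt, card_filter, Fintype.sum_prod_type]
  exact sum_congr rfl fun j _ => (card_filter _ _).symm

lemma two_mul_card_supp_union (p : (Fin n → ZMod 2) × (Fin n → ZMod 2)) :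
    2 * (supp p.1 ∪ supp p.2).card = ∑ j, if p.1 j = 0 ∧ p.2 j = 0 then 0 else 2 := by
  rw [supp, supp, ← filter_or, card_filter, mul_sum]
  refine sum_congr rfl fun j _ => ?_
  by_cases h : p.1 j = 0 ∧ p.2 j = 0 <;> simp [h]

lemma wt_kitaevMap (p : (Fin n → ZMod 2) × (Fin n → ZMod 2)) :
    wt (kitaevMap p) = 2 * (supp p.1 ∪ supp p.2).card := by
  have key : ∀ a b : ZMod 2, (supp fun i : Fin 4 =>
      if i = 0 then a else if i = 2 then b else if i = 3 then a + b else 0).card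
        = if a = 0 ∧ b = 0 then 0 else 2 := by decide
  rw [wt_eq_sum_card_supp_block, two_mul_card_supp_union]
  exact sum_congr rfl fun j _ => key (p.1 j) (p.2 j)

lemma two_mul_card_supp_pauliPart_le_wt {v : Fin n × Fin 4 → ZMod 2}
    (hv : ∀ j, ∑ a, v (j, a) = 0) :
    2 * (supp (pauliPart v).1 ∪ supp (pauliPart v).2).card ≤ wt v := by
  have key : ∀ w : Fin 4 → ZMod 2, w 0 + w 1 + w 2 + w 3 = 0 →
      (if w 0 + w 1 = 0 ∧ w 2 + w 1 = 0 then 0 else 2) ≤ (supp w).card := by decide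
  rw [wt_eq_sum_card_supp_block, two_mul_card_supp_union]
  exact sum_le_sum fun j _ => key (fun a => v (j, a)) (by simpa [Fin.sum_univ_four] using hv j)

end Kitaev

lemma Nat.sInf_eq_mul_sInf {A B : Set ℕ} (c : ℕ) (hAB : ∀ a ∈ A, c * a ∈ B)
    (hBA : ∀ b ∈ B, ∃ a ∈ A, c * a ≤ b) : sInf B = c * sInf A := by
  rcases A.eq_empty_or_nonempty with rfl | hA
  · have hB : B = ∅ := Set.eq_empty_of_forall_notMem fun b hb => by simpa using hBA b hb
    simp [hB]
  have hcA : c * sInf A ∈ B := hAB _ (Nat.sInf_mem hA)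
  obtain ⟨a, ha, hab⟩ := hBA _ (Nat.sInf_mem ⟨_, hcA⟩)
  exact le_antisymm (Nat.sInf_le hcA) ((Nat.mul_le_mul_left c (Nat.sInf_le ha)).trans hab)

theorem stmt_10_general {n d : ℕ}
    (S : Submodule (ZMod 2) ((Fin n → ZMod 2) × (Fin n → ZMod 2)))
    (hd : d = sInf {m : ℕ | ∃ p, p ∈ sympDual S ∧ p ∉ S ∧ m = (supp p.1 ∪ supp p.2).card}) :
    (∀ v ∈ dualCode (kitaevCode S), ∀ j : Fin n,
        Even ((Finset.univ.filter fun a : Fin 4 => v (j, a) ≠ 0).card)) ∧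
    sInf {m : ℕ | ∃ v, v ∈ dualCode (kitaevCode S) ∧ v ∉ kitaevCode S ∧ m = wt v}
      = 2 * d := by
  have hblock : ∀ v ∈ dualCode (kitaevCode S), ∀ j, ∑ a, v (j, a) = 0 :=
    fun v hv => ((mem_dualCode_kitaevCode_iff S v).mp hv).2
  refine ⟨fun v hv j => even_card_supp_of_sum_eq_zero _ (hblock v hv j), ?_⟩
  rw [hd]
  apply Nat.sInf_eq_mul_sInf
  · rintro _ ⟨p, hp, hpS, rfl⟩
    exact ⟨kitaevMap p, kitaevMap_mem_dualCode_kitaevCode hp,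
      fun h => hpS ((kitaevMap_mem_kitaevCode_iff S p).mp h), (wt_kitaevMap p).symm⟩
  · rintro _ ⟨v, hv, hvS, rfl⟩
    exact ⟨_, ⟨pauliPart v, pauliPart_mem_sympDual hv, pauliPart_notMem hv hvS, rfl⟩,
      two_mul_card_supp_pauliPart_le_wt (hblock v hv)⟩

/-- under the Kitaev mapping of an `[[n,k,d]]` stabilizer code to a Majorana
code on `4n` modes, any Majorana operator commuting with all block generators `D_j`
(i.e. any element of the centralizer) has even support in each block of four modes
`{b_j^x, b_j^y, b_j^z, c_j}`; and the distance of the Majorana code (minimum weight of a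
centralizer element not in the code) is exactly `2d`, where `d` is the distance of the
original stabilizer code (minimum Pauli weight `|supp x ∪ supp z|` over the symplectic
centralizer minus the stabilizer). -/
theorem stmt_10 {n k d : ℕ} (hk : k ≤ n)
    (S : Submodule (ZMod 2) ((Fin n → ZMod 2) × (Fin n → ZMod 2)))
    (hiso : ∀ p ∈ S, ∀ q ∈ S, symp p q = 0)
    (hdim : Module.finrank (ZMod 2) S = n - k)
    (hd : d = sInf {m : ℕ | ∃ p, p ∈ sympDual S ∧ p ∉ S ∧ m = (supp p.1 ∪ supp p.2).card}) :
    (∀ v ∈ dualCode (kitaevCode S), ∀ j : Fin n,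
        Even ((Finset.univ.filter fun a : Fin 4 => v (j, a) ≠ 0).card)) ∧
    sInf {m : ℕ | ∃ v, v ∈ dualCode (kitaevCode S) ∧ v ∉ kitaevCode S ∧ m = wt v}
      = 2 * d :=
  stmt_10_general S hd
end

section
/- Let S_maj be a Majorana fermion code on 2n Majorana modes with n - k independent generators and distance d, corresponding to a weakly self-dual classical code C ⊆ F_2^{2n} of dimension n - k with minimum weight of C^⊥ \ C equal to d. Then the doubled CSS code with C_X = C_Z = C is a [[2n, 2k, d]] weakly self-dual CSS code: it has 2n physical qubits, encodes 2k logical qubits, and has distance exactly d. -/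
/-!
A Pauli operator `X(x) Z(z)` of the doubled code is a nontrivial logical operator exactly when
`x, z ∈ C^⊥` and not both lie in `C`; then `x` or `z` alone is one, and its weight is bounded by
`|supp x ∪ supp z|`. Conversely every `v ∈ C^⊥ \ C` gives the pure X-type operator `X(v)` of
weight `wt v`. Hence both minima agree, and the count of logical qubits is arithmetic.
-/

theorem Nat.sInf_eq_of_subset_of_forall_exists_le {S T : Set ℕ} (hTS : T ⊆ S)
    (hST : ∀ m ∈ S, ∃ m' ∈ T, m' ≤ m) : sInf S = sInf T := by
  rcases T.eq_empty_or_nonempty with hT | hT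
  · have hS : S = ∅ := Set.eq_empty_of_forall_notMem fun m hm => by
      obtain ⟨m', hm', -⟩ := hST m hm
      simp [hT] at hm'
    rw [hS, hT]
  · obtain ⟨m', hm', hle⟩ := hST _ (Nat.sInf_mem (hT.mono hTS))
    exact le_antisymm (Nat.sInf_le (hTS (Nat.sInf_mem hT))) ((Nat.sInf_le hm').trans hle)

theorem wt_eq_card_supp {ι : Type*} [Fintype ι] (x : ι → ZMod 2) : wt x = (supp x).card := rfl

theorem supp_zero {ι : Type*} [Fintype ι] : supp (0 : ι → ZMod 2) = ∅ := by
  simp [supp]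

theorem exists_wt_le_card_supp_union {ι : Type*} [Fintype ι] [DecidableEq ι]
    {C : Submodule (ZMod 2) (ι → ZMod 2)} {x z : ι → ZMod 2}
    (hx : x ∈ dualCode C) (hz : z ∈ dualCode C) (hxz : ¬(x ∈ C ∧ z ∈ C)) :
    ∃ v ∈ dualCode C, v ∉ C ∧ wt v ≤ (supp x ∪ supp z).card := by
  by_cases hxC : x ∈ C
  · exact ⟨z, hz, fun hzC => hxz ⟨hxC, hzC⟩, Finset.card_le_card Finset.subset_union_right⟩
  · exact ⟨x, hx, hxC, Finset.card_le_card Finset.subset_union_left⟩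

theorem stmt_11_general {n k d : ℕ} (hk : k ≤ n)
    (C : Submodule (ZMod 2) (Fin (2 * n) → ZMod 2))
    (hdim : Module.finrank (ZMod 2) C = n - k)
    (hd : d = sInf {m : ℕ | ∃ v, v ∈ dualCode C ∧ v ∉ C ∧ m = wt v}) :
    (2 * n - 2 * Module.finrank (ZMod 2) C = 2 * k) ∧
    sInf {m : ℕ | ∃ x z : Fin (2 * n) → ZMod 2, x ∈ dualCode C ∧ z ∈ dualCode C ∧
        ¬(x ∈ C ∧ z ∈ C) ∧ m = (supp x ∪ supp z).card} = d := by
  refine ⟨by omega, ?_⟩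
  rw [hd]
  apply Nat.sInf_eq_of_subset_of_forall_exists_le
  · rintro m ⟨v, hv, hvC, rfl⟩
    refine ⟨v, 0, hv, (dualCode C).zero_mem, fun h => hvC h.1, ?_⟩
    rw [supp_zero, Finset.union_empty, wt_eq_card_supp]
  · rintro m ⟨x, z, hx, hz, hxz, rfl⟩
    obtain ⟨v, hv, hvC, hle⟩ := exists_wt_le_card_supp_union hx hz hxz
    exact ⟨wt v, ⟨v, hv, hvC, rfl⟩, hle⟩

/-- let `C ⊆ F₂^{2n}` be the weakly self-dual classical code of dimension
`n - k` associated with a Majorana fermion code on `2n` Majorana modes with `n - k`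
independent generators, whose distance is `d = min{wt x : x ∈ C^⊥ \ C}`.  Then the
doubled CSS code with `C_X = C_Z = C` is a `[[2n, 2k, d]]` weakly self-dual CSS code:
it has `2n` physical qubits, encodes `2n - 2 dim C = 2k` logical qubits, and its distance
(minimum Pauli weight over the centralizer minus the stabilizer) is exactly `d`. -/
theorem stmt_11 {n k d : ℕ} (hk : k ≤ n)
    (C : Submodule (ZMod 2) (Fin (2 * n) → ZMod 2))
    (hsd : C ≤ dualCode C)
    (hdim : Module.finrank (ZMod 2) C = n - k)
    (hd : d = sInf {m : ℕ | ∃ v, v ∈ dualCode C ∧ v ∉ C ∧ m = wt v}) :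
    (2 * n - 2 * Module.finrank (ZMod 2) C = 2 * k) ∧
    sInf {m : ℕ | ∃ x z : Fin (2 * n) → ZMod 2, x ∈ dualCode C ∧ z ∈ dualCode C ∧
        ¬(x ∈ C ∧ z ∈ C) ∧ m = (supp x ∪ supp z).card} = d :=
  stmt_11_general hk C hdim hd
end

section
/- Let C ⊆ F_2^N be weakly self-dual and M ⊆ {1,...,N}, with C(M) the subcode supported on M and C^M the restriction of C to M (both viewed in F_2^M). If C(M) = (C^M)^⊥ (equivalently C^M = C(M)^⊥), then M is 'cleanable': for every v ∈ C^⊥ there exists y ∈ C such that (v + y)|_M = 0. Conversely, if the inclusion C(M) ⊆ (C^M)^⊥ is strict, then there exists a vector in C^⊥ \ C supported on M (a logical operator on M). -/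
/-- Restriction of a vector to a subset `M` of coordinates (extended by zero). -/
def restrict {ι : Type*} [Fintype ι] [DecidableEq ι] (M : Finset ι)
    (y : ι → ZMod 2) : ι → ZMod 2 :=
  fun i => if i ∈ M then y i else 0

/-- `C(M)`: the subcode of codewords of `C` supported inside `M` (viewed in `F₂^M`). -/
def subCode {ι : Type*} [Fintype ι] (C : Submodule (ZMod 2) (ι → ZMod 2))
    (M : Finset ι) : Set (ι → ZMod 2) :=
  {x | x ∈ C ∧ ∀ i ∉ M, x i = 0}

/-- `C^M`: the restriction (puncturing) of `C` to `M`, i.e. the vectors supported on `M`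
that equal the restriction to `M` of some codeword of `C`. -/
def restCode {ι : Type*} [Fintype ι] [DecidableEq ι]
    (C : Submodule (ZMod 2) (ι → ZMod 2)) (M : Finset ι) : Set (ι → ZMod 2) :=
  {z | ∃ y ∈ C, z = restrict M y}

open Matrix

section DoubleOrthogonal

variable {K ι : Type*} [Field K] [Fintype ι]

lemma dotProductBilin_isRefl :
    LinearMap.BilinForm.IsRefl (dotProductBilin K K : LinearMap.BilinForm K (ι → K)) :=
  fun x y h => by rwa [dotProductBilin_apply_apply, dotProduct_comm] at h

lemma dotProductBilin_nondegenerate :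
    LinearMap.BilinForm.Nondegenerate (dotProductBilin K K : LinearMap.BilinForm K (ι → K)) := by
  classical
  constructor
  · intro x hx
    funext i
    simpa using hx (Pi.single i 1)
  · intro y hy
    funext i
    simpa using hy (Pi.single i 1)

lemma mem_of_forall_dotProduct_eq_zero (W : Submodule K (ι → K)) {x : ι → K}
    (h : ∀ u, (∀ w ∈ W, w ⬝ᵥ u = 0) → u ⬝ᵥ x = 0) : x ∈ W := by
  rw [← LinearMap.BilinForm.orthogonal_orthogonal dotProductBilin_nondegenerate
    dotProductBilin_isRefl W]
  exact fun u hu => h u fun w hw => hu w hw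

end DoubleOrthogonal

lemma dot_eq_dotProduct {ι : Type*} [Fintype ι] (x y : ι → ZMod 2) : dot x y = x ⬝ᵥ y := rfl

lemma dot_comm {ι : Type*} [Fintype ι] (x y : ι → ZMod 2) : dot x y = dot y x :=
  dotProduct_comm x y

section Restriction

variable {ι : Type*} [Fintype ι] [DecidableEq ι]

lemma restrict_apply_of_notMem (M : Finset ι) (y : ι → ZMod 2) {i : ι} (hi : i ∉ M) :
    restrict M y i = 0 :=
  if_neg hi

lemma restrict_eq_self {M : Finset ι} {x : ι → ZMod 2} (hx : ∀ i ∉ M, x i = 0) :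
    restrict M x = x := by
  funext i
  by_cases hi : i ∈ M
  · exact if_pos hi
  · rw [restrict_apply_of_notMem M x hi, hx i hi]

lemma restrict_restrict (M : Finset ι) (y : ι → ZMod 2) :
    restrict M (restrict M y) = restrict M y :=
  restrict_eq_self fun _ => restrict_apply_of_notMem M y

lemma restrict_add (M : Finset ι) (x y : ι → ZMod 2) :
    restrict M (x + y) = restrict M x + restrict M y := by
  funext i
  simp only [restrict, Pi.add_apply]
  split_ifs <;> simp

lemma dot_restrict_comm (M : Finset ι) (x y : ι → ZMod 2) :
    dot (restrict M x) y = dot x (restrict M y) := by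
  refine Finset.sum_congr rfl fun i _ => ?_
  simp only [restrict]
  split_ifs <;> simp

def restrictLinearMap (M : Finset ι) : (ι → ZMod 2) →ₗ[ZMod 2] (ι → ZMod 2) where
  toFun := restrict M
  map_add' := restrict_add M
  map_smul' c y := by
    funext i
    simp only [restrict, Pi.smul_apply, smul_eq_mul, RingHom.id_apply]
    split_ifs <;> simp

lemma mem_restCode_iff {C : Submodule (ZMod 2) (ι → ZMod 2)} {M : Finset ι} {z : ι → ZMod 2} :
    z ∈ restCode C M ↔ z ∈ C.map (restrictLinearMap M) :=
  exists_congr fun _ => and_congr_right fun _ => eq_comm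

end Restriction

section Cleaning

variable {ι : Type*} [Fintype ι] [DecidableEq ι] {C : Submodule (ZMod 2) (ι → ZMod 2)}
  {M : Finset ι}

def IsCleanable (C : Submodule (ZMod 2) (ι → ZMod 2)) (M : Finset ι) : Prop :=
  ∀ v ∈ dualCode C, ∃ y ∈ C, restrict M (v + y) = 0

lemma restrict_mem_restCode_of_subCode_eq
    (hC : subCode C M = {x | (∀ i ∉ M, x i = 0) ∧ ∀ z ∈ restCode C M, dot x z = 0})
    {v : ι → ZMod 2} (hv : v ∈ dualCode C) : restrict M v ∈ restCode C M := by
  rw [mem_restCode_iff]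
  refine mem_of_forall_dotProduct_eq_zero _ fun u hu => ?_
  have hu_mem : restrict M u ∈ subCode C M := by
    rw [hC]
    refine ⟨fun i hi => restrict_apply_of_notMem M u hi, ?_⟩
    rintro _ ⟨y, hy, rfl⟩
    rw [dot_restrict_comm, restrict_restrict, dot_comm]
    exact hu _ (Submodule.mem_map_of_mem hy)
  rw [← dot_eq_dotProduct, ← dot_restrict_comm]
  exact hv _ hu_mem.1

theorem isCleanable_of_subCode_eq
    (hC : subCode C M = {x | (∀ i ∉ M, x i = 0) ∧ ∀ z ∈ restCode C M, dot x z = 0}) :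
    IsCleanable C M := by
  intro v hv
  obtain ⟨y, hy, hvy⟩ := restrict_mem_restCode_of_subCode_eq hC hv
  exact ⟨y, hy, by
    rw [restrict_add, hvy]
    exact funext fun i => CharTwo.add_self_eq_zero _⟩

lemma mem_dualCode_of_orthogonal_restCode {x : ι → ZMod 2} (hxM : ∀ i ∉ M, x i = 0)
    (hx : ∀ z ∈ restCode C M, dot x z = 0) : x ∈ dualCode C := by
  intro y hy
  rw [dot_comm, ← restrict_eq_self hxM, dot_restrict_comm]
  exact hx _ ⟨y, hy, rfl⟩

end Cleaning

theorem stmt_18_general {N : ℕ} (C : Submodule (ZMod 2) (Fin N → ZMod 2))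
    (M : Finset (Fin N)) :
    ((subCode C M = {x | (∀ i ∉ M, x i = 0) ∧ ∀ z ∈ restCode C M, dot x z = 0} →
        ∀ v ∈ dualCode C, ∃ y ∈ C, restrict M (v + y) = 0) ∧
     ((∃ x : Fin N → ZMod 2, (∀ i ∉ M, x i = 0) ∧ (∀ z ∈ restCode C M, dot x z = 0) ∧
          x ∉ subCode C M) →
        ∃ w, w ∈ dualCode C ∧ w ∉ C ∧ ∀ i ∉ M, w i = 0)) := by
  refine ⟨isCleanable_of_subCode_eq, ?_⟩
  rintro ⟨x, hxM, hx, hx_notMem⟩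
  exact ⟨x, mem_dualCode_of_orthogonal_restCode hxM hx, fun hxC => hx_notMem ⟨hxC, hxM⟩, hxM⟩

/-- let `C ⊆ F₂^N` be weakly self-dual and `M` a subset of coordinates.
(i) If `C(M) = (C^M)^⊥` (orthogonal complement taken among vectors supported on `M`),
then `M` is cleanable: every `v ∈ C^⊥` can be modified by some `y ∈ C` so that `v + y`
vanishes on `M`.  (ii) Conversely, if the inclusion `C(M) ⊆ (C^M)^⊥` is strict, then there
is a vector of `C^⊥ \ C` supported on `M` (a logical operator on `M`). -/
theorem stmt_18 {N : ℕ} (C : Submodule (ZMod 2) (Fin N → ZMod 2))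
    (hsd : C ≤ dualCode C) (M : Finset (Fin N)) :
    ((subCode C M = {x | (∀ i ∉ M, x i = 0) ∧ ∀ z ∈ restCode C M, dot x z = 0} →
        ∀ v ∈ dualCode C, ∃ y ∈ C, restrict M (v + y) = 0) ∧
     ((∃ x : Fin N → ZMod 2, (∀ i ∉ M, x i = 0) ∧ (∀ z ∈ restCode C M, dot x z = 0) ∧
          x ∉ subCode C M) →
        ∃ w, w ∈ dualCode C ∧ w ∉ C ∧ ∀ i ∉ M, w i = 0)) :=
  stmt_18_general C M
end
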